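/- Every tautology of propositional logic built only from propositional letters, negation, and disjunction is provable in the proof system whose axioms are A ∨ ¬A ∨ B̄ and whose rules are: permutation of disjuncts, associativity (from A ∨ (B ∨ C̄) infer (A ∨ B) ∨ C̄), double negation introduction (from A ∨ B̄ infer ¬¬A ∨ B̄), and De Morgan (from ¬A ∨ C̄ and ¬B ∨ C̄ infer ¬(A ∨ B) ∨ C̄). -/

import Mathlib

/-- Propositional formulas built from letters by negation and disjunction. -/
inductive Fm where
  | letter : ℕ → Fm
  | neg : Fm → Fm
  | or : Fm → Fm → Fm
deriving DecidableEq

/-- Boolean evaluation under a valuation of the letters. -/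
def Fm.eval (v : ℕ → Bool) : Fm → Bool
  | .letter n => v n
  | .neg a => !(a.eval v)
  | .or a b => a.eval v || b.eval v

/-- A formula is a tautology if it is true under every valuation. -/
def Taut (A : Fm) : Prop := ∀ v : ℕ → Bool, A.eval v = true

/-- Right-associated disjunction `A ∨ B₁ ∨ ⋯ ∨ Bₙ` (the list possibly empty). -/
def disj : Fm → List Fm → Fm
  | A, [] => A
  | A, B :: l => .or A (disj B l)

/-- Provability: axiom scheme `A ∨ ¬A ∨ B̄`, rules: permutation of disjuncts,
associativity, double negation introduction, De Morgan. -/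
inductive Prov : Fm → Prop where
  | ax (A : Fm) (l : List Fm) : Prov (disj A (.neg A :: l))
  | perm (A B : Fm) (l l' : List Fm) : (A :: l).Perm (B :: l') →
      Prov (disj A l) → Prov (disj B l')
  | assoc (A B : Fm) (l : List Fm) :
      Prov (disj A (B :: l)) → Prov (disj (.or A B) l)
  | dneg (A : Fm) (l : List Fm) :
      Prov (disj A l) → Prov (disj (.neg (.neg A)) l)
  | demorgan (A B : Fm) (l : List Fm) :
      Prov (disj (.neg A) l) → Prov (disj (.neg B) l) →
      Prov (disj (.neg (.or A B)) l)

/-! Read a list of formulas as the disjunction of its members. Every rule of the calculus is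
invertible semantically: if the conclusion of `assoc`, `dneg` or `demorgan` is a tautology, so are
its premises, which are smaller. So a valid sequent with a non-literal member reduces, through
`perm` and one rule, to smaller valid sequents, and a valid sequent of literals contains some
letter together with its negation, which is an axiom up to `perm`. -/

namespace Fm

def size : Fm → ℕ
  | .letter _ => 1
  | .neg A => A.size + 1
  | .or A B => A.size + B.size + 1

def IsLiteral : Fm → Prop
  | .letter _ => True
  | .neg (.letter _) => True
  | _ => False

theorem neg_ne_self (A : Fm) : A.neg ≠ A := fun h => by
  simpa [size] using congrArg size h

end Fm

def ProvSeq : List Fm → Prop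
  | [] => False
  | A :: l => Prov (disj A l)

def Valid (l : List Fm) : Prop := ∀ v : ℕ → Bool, ∃ A ∈ l, A.eval v = true

def seqSize (l : List Fm) : ℕ := (l.map Fm.size).sum

theorem ProvSeq.perm {l l' : List Fm} (hp : l.Perm l') (h : ProvSeq l) : ProvSeq l' := by
  match l, l' with
  | [], _ => exact h.elim
  | _ :: _, [] => exact absurd hp.length_eq (by simp)
  | A :: t, B :: t' => exact Prov.perm A B t t' hp h

theorem ProvSeq.of_mem_of_neg_mem {A : Fm} {l : List Fm} (hA : A ∈ l) (hnA : .neg A ∈ l) :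
    ProvSeq l := by
  have hnA' : .neg A ∈ l.erase A := (List.mem_erase_of_ne A.neg_ne_self).mpr hnA
  have hp : (A :: .neg A :: (l.erase A).erase (.neg A)).Perm l :=
    ((List.perm_cons_erase hnA').cons A).symm.trans (List.perm_cons_erase hA).symm
  exact ProvSeq.perm hp (Prov.ax A _)

theorem Valid.perm {l l' : List Fm} (hp : l.Perm l') (h : Valid l) : Valid l' := fun v => by
  simpa only [hp.mem_iff] using h v

theorem Valid.of_dneg {A : Fm} {l : List Fm} (h : Valid (.neg (.neg A) :: l)) :
    Valid (A :: l) := fun v => by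
  simpa [Fm.eval] using h v

theorem Valid.of_or {A B : Fm} {l : List Fm} (h : Valid (.or A B :: l)) :
    Valid (A :: B :: l) := fun v => by
  simpa [Fm.eval, or_assoc] using h v

theorem Valid.of_neg_or {A B : Fm} {l : List Fm} (h : Valid (.neg (.or A B) :: l)) :
    Valid (.neg A :: l) ∧ Valid (.neg B :: l) := by
  constructor <;> intro v <;> have := h v <;>
    simp only [List.mem_cons, exists_eq_or_imp, Fm.eval, Bool.not_eq_true',
      Bool.or_eq_false_iff] at this ⊢ <;> tauto

theorem exists_letter_mem_and_neg_mem {l : List Fm} (hlit : ∀ A ∈ l, A.IsLiteral)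
    (hl : Valid l) : ∃ n, Fm.letter n ∈ l ∧ Fm.neg (Fm.letter n) ∈ l := by
  by_contra! hclash
  -- without a complementary pair, making every negated letter of `l` true falsifies all of `l`
  obtain ⟨A, hA, htrue⟩ := hl fun n => decide (Fm.neg (Fm.letter n) ∈ l)
  match A, hlit A hA with
  | .letter n, _ => exact hclash n hA (by simpa [Fm.eval] using htrue)
  | .neg (.letter n), _ => simp [Fm.eval, hA] at htrue

theorem seqSize_eq_size_add_seqSize_erase {A : Fm} {l : List Fm} (hA : A ∈ l) :
    seqSize l = A.size + seqSize (l.erase A) := by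
  simp [seqSize, ((List.perm_cons_erase hA).map Fm.size).sum_eq]

theorem ProvSeq.of_valid (l : List Fm) (hl : Valid l) : ProvSeq l := by
  by_cases hlit : ∀ A ∈ l, A.IsLiteral
  · obtain ⟨n, hpos, hneg⟩ := exists_letter_mem_and_neg_mem hlit hl
    exact ProvSeq.of_mem_of_neg_mem hpos hneg
  push Not at hlit
  obtain ⟨C, hC, hClit⟩ := hlit
  have hperm := List.perm_cons_erase hC
  have hsize := seqSize_eq_size_add_seqSize_erase hC
  refine ProvSeq.perm hperm.symm ?_
  replace hl := hl.perm hperm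
  match C, hClit with
  | .letter _, hClit | .neg (.letter _), hClit => exact (hClit trivial).elim
  | .neg (.neg A), _ => exact Prov.dneg A _ (of_valid (A :: _) hl.of_dneg)
  | .neg (.or A B), _ =>
    exact Prov.demorgan A B _ (of_valid (.neg A :: _) hl.of_neg_or.1)
      (of_valid (.neg B :: _) hl.of_neg_or.2)
  | .or A B, _ => exact Prov.assoc A B _ (of_valid (A :: B :: _) hl.of_or)
termination_by seqSize l
decreasing_by all_goals simp only [seqSize, List.map_cons, List.sum_cons, Fm.size] at hsize ⊢; omega

theorem completeness (A : Fm) (h : Taut A) : Prov A :=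
  ProvSeq.of_valid [A] fun v => ⟨A, List.mem_singleton_self A, h v⟩
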